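/- Let q : ℝ → ℍ be smooth and nonvanishing and let (γ, V) be its frame-Hopf framed curve. Then the relative stretch rate of (γ, V) satisfies st(t) = 2·⟨q′(t), q(t)⟩_ℍ / |q(t)|⁴ for all t, where ⟨p,r⟩_ℍ = Re(p·conj(r)) is the Euclidean inner product on ℍ ≅ ℝ⁴. -/

import Mathlib

open scoped Quaternion

noncomputable section

/-- The quaternion `i`. -/
def qI : ℍ[ℝ] := ⟨0, 1, 0, 0⟩

/-- The Euclidean inner product on `ℍ ≅ ℝ⁴`, `⟨p,r⟩ = Re(p·conj(r))`. -/
def innH (p r : ℍ[ℝ]) : ℝ := (p * star r).re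

/-- The velocity `γ' = conj(q)·i·q` of the frame-Hopf base curve, as a vector in `ℝ³`
(identifying purely imaginary quaternions with `ℝ³`). -/
def gammaDeriv (q : ℝ → ℍ[ℝ]) (t : ℝ) : EuclideanSpace ℝ (Fin 3) :=
  !₂[(star (q t) * qI * q t).imI, (star (q t) * qI * q t).imJ, (star (q t) * qI * q t).imK]

/-- The speed `‖γ'‖` of the frame-Hopf base curve. -/
def speed (q : ℝ → ℍ[ℝ]) (t : ℝ) : ℝ := ‖gammaDeriv q t‖

/-- The relative stretch rate `st = ‖γ'‖⁻¹ · D_s‖γ'‖`, where `D_s = ‖γ'‖⁻¹ d/dt`. -/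
def stretchRate (q : ℝ → ℍ[ℝ]) (t : ℝ) : ℝ :=
  (speed q t)⁻¹ * ((speed q t)⁻¹ * deriv (speed q) t)

/-- The real part of a quaternion, as a continuous linear map. -/
def reCLM : ℍ[ℝ] →L[ℝ] ℝ :=
  LinearMap.toContinuousLinearMap
    { toFun := QuaternionAlgebra.re, map_add' := fun _ _ => rfl, map_smul' := fun _ _ => rfl }

instance : StarModule ℝ ℍ[ℝ] := ⟨fun r a => by simp [Quaternion.star_smul]⟩

lemma norm_qI : ‖qI‖ = 1 := by
  have : Quaternion.normSq qI = 1 := by rw [Quaternion.normSq_def']; simp [qI]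
  have h := Quaternion.normSq_eq_norm_mul_self qI
  nlinarith [norm_nonneg qI]

lemma re_star_qI_mul (p : ℍ[ℝ]) : (star p * qI * p).re = 0 := by
  have hstar : star (star p * qI * p) = -(star p * qI * p) := by
    have : star qI = -qI := by
      ext <;> simp only [Quaternion.re_star, Quaternion.imI_star, Quaternion.imJ_star,
        Quaternion.imK_star, Quaternion.re_neg, Quaternion.imI_neg, Quaternion.imJ_neg,
        Quaternion.imK_neg] <;> simp [qI]
    simp [star_mul, this, mul_assoc]
  have := congrArg QuaternionAlgebra.re hstar
  simp only [Quaternion.re_star, Quaternion.re_neg] at this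
  linarith

lemma speed_eq (q : ℝ → ℍ[ℝ]) (t : ℝ) : speed q t = ‖q t‖ ^ 2 := by
  set p := star (q t) * qI * q t with hp
  have hnp : ‖p‖ = ‖q t‖ ^ 2 := by
    rw [hp, norm_mul, norm_mul, norm_star, norm_qI, mul_one, sq]
  have hre : p.re = 0 := re_star_qI_mul (q t)
  have hsum : speed q t = Real.sqrt (p.imI ^ 2 + p.imJ ^ 2 + p.imK ^ 2) := by
    rw [speed, gammaDeriv, EuclideanSpace.norm_eq]
    congr 1
    rw [Fin.sum_univ_three]
    simp only [Matrix.cons_val_zero, Matrix.cons_val_one, Matrix.head_cons,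
      Matrix.cons_val_two, Matrix.tail_cons, Real.norm_eq_abs, sq_abs]
    rfl
  have hnorm : ‖p‖ = Real.sqrt (p.imI ^ 2 + p.imJ ^ 2 + p.imK ^ 2) := by
    have h1 : Quaternion.normSq p = p.imI ^ 2 + p.imJ ^ 2 + p.imK ^ 2 := by
      rw [Quaternion.normSq_def', hre]; ring
    have h2 := Quaternion.normSq_eq_norm_mul_self p
    rw [← h1, h2, ← sq, Real.sqrt_sq (norm_nonneg p)]
  rw [hsum, ← hnorm, hnp]

lemma deriv_speed (q : ℝ → ℍ[ℝ]) (hq : ContDiff ℝ (⊤ : ℕ∞) q) (t : ℝ) :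
    deriv (speed q) t = 2 * innH (deriv q t) (q t) := by
  have hfun : speed q = fun s => ((q s) * star (q s)).re := by
    funext s
    rw [speed_eq]
    rw [← Quaternion.normSq_def]
    rw [Quaternion.normSq_eq_norm_mul_self, sq]
  rw [hfun]
  have hd : HasDerivAt q (deriv q t) t :=
    ((hq.differentiable (by simp)) t).hasDerivAt
  have hds : HasDerivAt (fun s => star (q s)) (star (deriv q t)) t := hd.star
  have hmul : HasDerivAt (fun s => q s * star (q s))
      (deriv q t * star (q t) + q t * star (deriv q t)) t := hd.mul hds
  have hre : HasDerivAt (fun s => (q s * star (q s)).re)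
      ((deriv q t * star (q t) + q t * star (deriv q t)).re) t := by
    exact reCLM.hasFDerivAt.comp_hasDerivAt t hmul
  rw [hre.deriv]
  have h2 : (q t * star (deriv q t)).re = (deriv q t * star (q t)).re := by
    simp [Quaternion.re_mul]; ring
  simp only [Quaternion.re_add, h2, innH]
  ring

/-- The relative stretch rate of a frame-Hopf framed curve is given in quaternionic
coordinates by `st = 2·⟨q', q⟩_ℍ / |q|⁴`. -/
theorem stretchRate_quaternionic
    (q : ℝ → ℍ[ℝ]) (hq : ContDiff ℝ (⊤ : ℕ∞) q) (h0 : ∀ t, q t ≠ 0) (t : ℝ) :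
    stretchRate q t = 2 * innH (deriv q t) (q t) / ‖q t‖ ^ 4 := by
  have hn : ‖q t‖ ≠ 0 := norm_ne_zero_iff.mpr (h0 t)
  rw [stretchRate, deriv_speed q hq, speed_eq]
  rw [div_eq_mul_inv, show (‖q t‖ ^ 4) = (‖q t‖ ^ 2 * ‖q t‖ ^ 2) by ring, mul_inv]
  ring
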